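/- arXiv:2504.08592 — 2 statements merged into one kernel-verified Lean document; each statement's English description precedes it below -/
import Mathlib

section
/- Let u(z₁,z₂,z₃) = √(−log|z₁|)·(|z₂|² − 1) on the ball B(0,1/4) ⊂ ℂ³ (for z₁ ≠ 0). Then for z₁ ≠ 0 the Wirtinger derivatives of u satisfy ∂²u/∂z₁∂z̄₁ · ∂²u/∂z₂∂z̄₂ − ∂²u/∂z₁∂z̄₂ · ∂²u/∂z₂∂z̄₁ = (1/(8|z₁|²(−log|z₁|)))·(1/2 − |z₂|²), and consequently this expression is nonnegative at every point of B(0,1/4) with z₁ ≠ 0. -/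
open Complex

noncomputable section

/-- The Wirtinger derivative `∂f/∂z = (∂f/∂x − i ∂f/∂y)/2` of `f : ℂ → ℂ`. -/
def wirtD (f : ℂ → ℂ) (z : ℂ) : ℂ :=
  (1 / 2) * (fderiv ℝ f z 1 - Complex.I * fderiv ℝ f z Complex.I)

/-- The conjugate Wirtinger derivative `∂f/∂z̄ = (∂f/∂x + i ∂f/∂y)/2` of `f : ℂ → ℂ`. -/
def wirtDbar (f : ℂ → ℂ) (z : ℂ) : ℂ :=
  (1 / 2) * (fderiv ℝ f z 1 + Complex.I * fderiv ℝ f z Complex.I)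

/-- The function `u(z₁,z₂) = √(−log|z₁|)·(|z₂|² − 1)` (independent of `z₃`),
viewed as a complex-valued (in fact real-valued) function. -/
def uFun (z₁ z₂ : ℂ) : ℂ :=
  ((Real.sqrt (-Real.log (‖z₁‖)) * (‖z₂‖ ^ 2 - 1) : ℝ) : ℂ)

/-!
Radial functions are easy to differentiate in the Wirtinger sense: `∂̄ φ(|w|²) = φ'(|w|²) w` and
`∂ φ(|w|²) = φ'(|w|²) w̄`, hence `∂∂̄ φ(|w|²) = φ' + |w|² φ''`. The function `u` is the product
`s(t₁) (t₂ − 1)` of radial functions, where `tᵢ = |zᵢ|²` and `s(t) = √(−log t / 2)`, so its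
complex Hessian determinant is `(s' + t₁ s'') s (t₂ − 1) − t₁ t₂ s'²`. From `s² = −log t / 2` one
gets `s' = −1/(4ts)` and `s' + t s'' = (t s')' = −1/(16 t s³)`, and the determinant collapses to
`(1 − 2 t₂) / (16 t₁ s²)` with `s² = −log |z₁|`.
-/

open Filter Topology ComplexConjugate

section Wirtinger

variable {f g : ℂ → ℂ} {z : ℂ}

theorem wirtD_congr (h : f =ᶠ[𝓝 z] g) : wirtD f z = wirtD g z := by
  unfold wirtD; rw [h.fderiv_eq]

theorem wirtD_mul (hf : DifferentiableAt ℝ f z) (hg : DifferentiableAt ℝ g z) :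
    wirtD (fun w => f w * g w) z = wirtD f z * g z + f z * wirtD g z := by
  unfold wirtD
  rw [fderiv_fun_mul hf hg]
  simp only [add_apply, smul_apply, smul_eq_mul]
  ring

theorem wirtD_mul_const (hf : DifferentiableAt ℝ f z) (c : ℂ) :
    wirtD (fun w => f w * c) z = wirtD f z * c := by
  unfold wirtD
  rw [fderiv_mul_const hf]
  simp only [smul_apply, smul_eq_mul]
  ring

theorem wirtD_id : wirtD (fun w => w) z = 1 := by
  simp only [wirtD, fderiv_fun_id, ContinuousLinearMap.id_apply, I_mul_I]
  ring

end Wirtinger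

theorem hasFDerivAt_normSq (z : ℂ) :
    HasFDerivAt normSq ((2 * z.re) • reCLM + (2 * z.im) • imCLM) z := by
  have h := (reCLM.hasFDerivAt.mul reCLM.hasFDerivAt).add
    (imCLM.hasFDerivAt.mul imCLM.hasFDerivAt) (x := z)
  rw [show normSq = fun w : ℂ => w.re * w.re + w.im * w.im from funext normSq_apply]
  refine h.congr_fderiv ?_
  ext v; simp; ring

section Radial

variable {φ : ℝ → ℝ} {z : ℂ}

theorem HasDerivAt.hasFDerivAt_ofReal_comp_normSq {φ' : ℝ} (h : HasDerivAt φ φ' (normSq z)) :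
    HasFDerivAt (fun w => (φ (normSq w) : ℂ))
      (ofRealCLM.comp (φ' • ((2 * z.re) • reCLM + (2 * z.im) • imCLM))) z :=
  ofRealCLM.hasFDerivAt.comp z (h.comp_hasFDerivAt z (hasFDerivAt_normSq z))

theorem wirtD_ofReal_comp_normSq {φ' : ℝ} (h : HasDerivAt φ φ' (normSq z)) :
    wirtD (fun w => (φ (normSq w) : ℂ)) z = φ' * conj z := by
  unfold wirtD
  rw [h.hasFDerivAt_ofReal_comp_normSq.fderiv]
  apply Complex.ext <;> simp <;> ring

theorem wirtDbar_ofReal_comp_normSq {φ' : ℝ} (h : HasDerivAt φ φ' (normSq z)) :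
    wirtDbar (fun w => (φ (normSq w) : ℂ)) z = φ' * z := by
  unfold wirtDbar
  rw [h.hasFDerivAt_ofReal_comp_normSq.fderiv]
  apply Complex.ext <;> simp <;> ring

theorem wirtD_wirtDbar_ofReal_comp_normSq {φ' : ℝ → ℝ} {φ'' : ℝ}
    (hφ : ∀ᶠ t in 𝓝 (normSq z), HasDerivAt φ (φ' t) t) (hφ' : HasDerivAt φ' φ'' (normSq z)) :
    wirtD (fun w => wirtDbar (fun w' => (φ (normSq w') : ℂ)) w) z
      = ((φ' (normSq z) + normSq z * φ'' : ℝ) : ℂ) := by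
  have hdbar : (fun w => wirtDbar (fun w' => (φ (normSq w') : ℂ)) w)
      =ᶠ[𝓝 z] fun w => (φ' (normSq w) : ℂ) * w :=
    (continuous_normSq.continuousAt.eventually hφ).mono
      fun w hw => wirtDbar_ofReal_comp_normSq hw
  rw [wirtD_congr hdbar, wirtD_mul hφ'.hasFDerivAt_ofReal_comp_normSq.differentiableAt
    differentiableAt_fun_id, wirtD_ofReal_comp_normSq hφ', wirtD_id]
  push_cast
  linear_combination (φ'' : ℂ) * mul_conj z

end Radial

def radialProduct (φ ψ : ℝ → ℝ) (a b : ℂ) : ℂ :=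
  ((φ (normSq a) * ψ (normSq b) : ℝ) : ℂ)

def wirtingerHessianDet (u : ℂ → ℂ → ℂ) (z₁ z₂ : ℂ) : ℂ :=
  wirtD (fun a => wirtDbar (fun a' => u a' z₂) a) z₁
      * wirtD (fun b => wirtDbar (fun b' => u z₁ b') b) z₂
    - wirtD (fun a => wirtDbar (fun b' => u a b') z₂) z₁
      * wirtD (fun b => wirtDbar (fun a' => u a' b) z₁) z₂

theorem radialProduct_comm (φ ψ : ℝ → ℝ) (a b : ℂ) :
    radialProduct φ ψ a b = radialProduct ψ φ b a := by
  rw [radialProduct, radialProduct, mul_comm]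

section RadialProduct

variable {φ ψ φ' ψ' : ℝ → ℝ} {φ'' ψ'' : ℝ} {z₁ z₂ : ℂ}

theorem wirtD_wirtDbar_radialProduct_left
    (hφ : ∀ᶠ t in 𝓝 (normSq z₁), HasDerivAt φ (φ' t) t) (hφ' : HasDerivAt φ' φ'' (normSq z₁)) :
    wirtD (fun a => wirtDbar (fun a' => radialProduct φ ψ a' z₂) a) z₁
      = (((φ' (normSq z₁) + normSq z₁ * φ'') * ψ (normSq z₂) : ℝ) : ℂ) := by
  refine (wirtD_wirtDbar_ofReal_comp_normSq (φ := fun t => φ t * ψ (normSq z₂))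
    (hφ.mono fun t ht => ht.mul_const _) (hφ'.mul_const _)).trans ?_
  congr 1; ring

theorem wirtD_wirtDbar_radialProduct_right
    (hψ : ∀ᶠ t in 𝓝 (normSq z₂), HasDerivAt ψ (ψ' t) t) (hψ' : HasDerivAt ψ' ψ'' (normSq z₂)) :
    wirtD (fun b => wirtDbar (fun b' => radialProduct φ ψ z₁ b') b) z₂
      = ((φ (normSq z₁) * (ψ' (normSq z₂) + normSq z₂ * ψ'') : ℝ) : ℂ) := by
  refine (wirtD_wirtDbar_ofReal_comp_normSq (φ := fun t => φ (normSq z₁) * ψ t)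
    (hψ.mono fun t ht => ht.const_mul _) (hψ'.const_mul _)).trans ?_
  congr 1; ring

theorem wirtD_wirtDbar_radialProduct_mixed {φ₁ ψ₁ : ℝ}
    (hφ : HasDerivAt φ φ₁ (normSq z₁)) (hψ : HasDerivAt ψ ψ₁ (normSq z₂)) :
    wirtD (fun a => wirtDbar (fun b' => radialProduct φ ψ a b') z₂) z₁
      = φ₁ * ψ₁ * conj z₁ * z₂ := by
  have hdbar : (fun a => wirtDbar (fun b' => radialProduct φ ψ a b') z₂)
      = fun a => ((φ (normSq a) * ψ₁ : ℝ) : ℂ) * z₂ :=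
    funext fun a => wirtDbar_ofReal_comp_normSq (hψ.const_mul (φ (normSq a)))
  rw [hdbar, wirtD_mul_const (hφ.mul_const ψ₁).hasFDerivAt_ofReal_comp_normSq.differentiableAt,
    wirtD_ofReal_comp_normSq (hφ.mul_const ψ₁)]
  push_cast
  ring

theorem wirtingerHessianDet_radialProduct
    (hφ : ∀ᶠ t in 𝓝 (normSq z₁), HasDerivAt φ (φ' t) t) (hφ' : HasDerivAt φ' φ'' (normSq z₁))
    (hψ : ∀ᶠ t in 𝓝 (normSq z₂), HasDerivAt ψ (ψ' t) t) (hψ' : HasDerivAt ψ' ψ'' (normSq z₂)) :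
    wirtingerHessianDet (radialProduct φ ψ) z₁ z₂
      = (((φ' (normSq z₁) + normSq z₁ * φ'') * ψ (normSq z₂)
            * (φ (normSq z₁) * (ψ' (normSq z₂) + normSq z₂ * ψ''))
          - (φ' (normSq z₁) * ψ' (normSq z₂)) ^ 2 * normSq z₁ * normSq z₂ : ℝ) : ℂ) := by
  unfold wirtingerHessianDet
  rw [wirtD_wirtDbar_radialProduct_left hφ hφ', wirtD_wirtDbar_radialProduct_right hψ hψ',
    wirtD_wirtDbar_radialProduct_mixed hφ.self_of_nhds hψ.self_of_nhds]
  simp_rw [radialProduct_comm φ ψ]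
  rw [wirtD_wirtDbar_radialProduct_mixed hψ.self_of_nhds hφ.self_of_nhds]
  push_cast
  rw [← mul_conj z₁, ← mul_conj z₂]
  ring

end RadialProduct

def sqrtNegHalfLog (t : ℝ) : ℝ := Real.sqrt (-Real.log t / 2)

section SqrtNegHalfLog

variable {t : ℝ}

theorem sq_sqrtNegHalfLog (h0 : 0 ≤ t) (h1 : t ≤ 1) :
    sqrtNegHalfLog t ^ 2 = -Real.log t / 2 :=
  Real.sq_sqrt (by linarith [Real.log_nonpos h0 h1])

theorem sqrtNegHalfLog_pos (h0 : 0 < t) (h1 : t < 1) : 0 < sqrtNegHalfLog t :=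
  Real.sqrt_pos.mpr (by linarith [Real.log_neg h0 h1])

theorem hasDerivAt_sqrtNegHalfLog (h0 : 0 < t) (h1 : t < 1) :
    HasDerivAt sqrtNegHalfLog (-(4 * t * sqrtNegHalfLog t)⁻¹) t := by
  have hs := sqrtNegHalfLog_pos h0 h1
  have hlog : HasDerivAt (fun t => -Real.log t / 2) (-t⁻¹ / 2) t :=
    (Real.hasDerivAt_log h0.ne').neg.div_const 2
  refine (hlog.sqrt (by linarith [Real.log_neg h0 h1])).congr_deriv ?_
  unfold sqrtNegHalfLog at hs ⊢
  field_simp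
  norm_num

theorem hasDerivAt_deriv_sqrtNegHalfLog (h0 : 0 < t) (h1 : t < 1) :
    HasDerivAt (fun t => -(4 * t * sqrtNegHalfLog t)⁻¹)
      ((4 * sqrtNegHalfLog t ^ 2 - 1) / (16 * t ^ 2 * sqrtNegHalfLog t ^ 3)) t := by
  have hs := sqrtNegHalfLog_pos h0 h1
  refine ((((hasDerivAt_id' t).const_mul 4).fun_mul (hasDerivAt_sqrtNegHalfLog h0 h1)).inv
    (mul_pos (by linarith) hs).ne').neg.congr_deriv ?_
  field_simp
  ring

end SqrtNegHalfLog

theorem uFun_eq_radialProduct : uFun = radialProduct sqrtNegHalfLog (fun t => t - 1) := by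
  ext a b
  rw [uFun, radialProduct, sqrtNegHalfLog, ← normSq_eq_norm_sq, norm_def,
    Real.log_sqrt (normSq_nonneg a), neg_div]

/-- On the ball `B(0,1/4) ⊂ ℂ³` and for `z₁ ≠ 0`, the Wirtinger
derivatives of `u(z) = √(−log|z₁|)(|z₂|²−1)` satisfy
`∂²u/∂z₁∂z̄₁ · ∂²u/∂z₂∂z̄₂ − ∂²u/∂z₁∂z̄₂ · ∂²u/∂z₂∂z̄₁
  = (1/(8|z₁|²(−log|z₁|)))·(1/2 − |z₂|²)`,
and this expression is nonnegative there. -/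
theorem hessian_determinant_of_uFun (z₁ z₂ z₃ : ℂ)
    (hball : ‖z₁‖ ^ 2 + ‖z₂‖ ^ 2 + ‖z₃‖ ^ 2 < 1 / 16)
    (hz₁ : z₁ ≠ 0) :
    wirtD (fun a => wirtDbar (fun a' => uFun a' z₂) a) z₁
        * wirtD (fun b => wirtDbar (fun b' => uFun z₁ b') b) z₂
      - wirtD (fun a => wirtDbar (fun b' => uFun a b') z₂) z₁
        * wirtD (fun b => wirtDbar (fun a' => uFun a' b) z₁) z₂
      = ((1 / (8 * ‖z₁‖ ^ 2 * (-Real.log (‖z₁‖)))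
            * (1 / 2 - ‖z₂‖ ^ 2) : ℝ) : ℂ)
    ∧ 0 ≤ (1 / (8 * ‖z₁‖ ^ 2 * (-Real.log (‖z₁‖)))
            * (1 / 2 - ‖z₂‖ ^ 2) : ℝ) := by
  have ht₁ : 0 < normSq z₁ := normSq_pos.mpr hz₁
  have ht₁' : normSq z₁ < 1 := by nlinarith [normSq_eq_norm_sq z₁]
  have ht₂ : normSq z₂ < 1 / 2 := by nlinarith [normSq_eq_norm_sq z₂]
  have hs := sqrtNegHalfLog_pos ht₁ ht₁'
  have hlog : -Real.log ‖z₁‖ = sqrtNegHalfLog (normSq z₁) ^ 2 := by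
    rw [sq_sqrtNegHalfLog ht₁.le ht₁'.le, norm_def, Real.log_sqrt (normSq_nonneg z₁), neg_div]
  have hdet := wirtingerHessianDet_radialProduct (z₂ := z₂)
    (eventually_of_mem (Ioo_mem_nhds ht₁ ht₁') fun t ht => hasDerivAt_sqrtNegHalfLog ht.1 ht.2)
    (hasDerivAt_deriv_sqrtNegHalfLog ht₁ ht₁')
    (Eventually.of_forall fun t => (hasDerivAt_id' t).sub_const 1) (hasDerivAt_const _ 1)
  change wirtingerHessianDet uFun z₁ z₂ = _ ∧ _
  rw [uFun_eq_radialProduct, hdet, hlog, ← normSq_eq_norm_sq, ← normSq_eq_norm_sq]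
  refine ⟨congrArg _ ?_, mul_nonneg (by positivity) (by linarith)⟩
  field_simp
  ring
end
end

section
/- For every ε with 0 < ε < 1/8, the integral over the closed ball K = {z ∈ ℂ³ : |z| ≤ ε} of the function z ↦ (4/((−log|z₁|)·|z₁|²))·(1/2 − |z₂|²) with respect to Lebesgue measure on ℂ³ ≅ ℝ⁶ is infinite: ∫_K 4(1/2 − |z₂|²)/(|z₁|²(−log|z₁|)) dV = +∞. (Consequently the density of (dd^c u)² ∧ (i/2)dz₃∧dz̄₃ for u = √(−log|z₁|)(|z₂|²−1) is not locally integrable near {z₁ = 0}, so this wedge product is not a Radon measure on B(0,1/4).) -/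
/-!
Where `|z₂|² ≤ 1/4` the numerator `4(1/2 − |z₂|²)` is at least `1`, so on a small polydisc the
integral dominates a positive multiple of `∫_{|w| < δ} dA(w) / (|w|² (−log |w|))` over a disc in
`ℂ`. In polar coordinates this is `2π ∫₀^δ dr / (r (−log r))`, which diverges because
`log (−log r)` is an antiderivative of the integrand (up to sign) and blows up as `r → 0⁺`.
-/

open MeasureTheory Set Filter Topology Metric Module

theorem not_integrableOn_Ioo_zero_inv_mul_log {r : ℝ} (hr : 0 < r) :
    ¬IntegrableOn (fun y : ℝ => (y * Real.log y)⁻¹) (Ioo 0 r) := by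
  have hderiv : ∀ y ∈ Ioo (0 : ℝ) 1,
      HasDerivAt (fun y => Real.log (-Real.log y)) (y * Real.log y)⁻¹ y := by
    intro y ⟨hy0, hy1⟩
    have hlog : Real.log y ≠ 0 := (Real.log_neg hy0 hy1).ne
    rw [show (y * Real.log y)⁻¹ = -y⁻¹ / -Real.log y by field_simp]
    exact (Real.hasDerivAt_log hy0.ne').neg.log (neg_ne_zero.2 hlog)
  have hnear : ∀ᶠ y in 𝓝[>] (0 : ℝ), y ∈ Ioo (0 : ℝ) 1 := Ioo_mem_nhdsGT one_pos
  refine not_integrableOn_of_tendsto_norm_atTop_of_deriv_isBigO_filter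
    (f := fun y => Real.log (-Real.log y)) (𝓝[>] 0) (Ioo_mem_nhdsGT hr)
    (hnear.mono fun y hy => (hderiv y hy).differentiableAt) ?_
    (EventuallyEq.isBigO (hnear.mono fun y hy => (hderiv y hy).deriv))
  exact tendsto_norm_atTop_atTop.comp
    (Real.tendsto_log_atTop.comp (tendsto_neg_atBot_atTop.comp Real.tendsto_log_nhdsGT_zero))

section Radial

variable {E : Type*} [NormedAddCommGroup E] [NormedSpace ℝ E] [FiniteDimensional ℝ E]
  [Nontrivial E] [MeasurableSpace E] [BorelSpace E] (μ : Measure E) [μ.IsAddHaarMeasure]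

theorem not_integrableOn_ball_inv_norm_pow_finrank_mul_neg_log {r : ℝ} (hr : 0 < r) :
    ¬IntegrableOn (fun x : E => 1 / (‖x‖ ^ finrank ℝ E * -Real.log ‖x‖)) (ball 0 r) μ := by
  rw [integrableOn_fun_norm_addHaar μ (f := fun y => 1 / (y ^ finrank ℝ E * -Real.log y))]
  intro h
  refine not_integrableOn_Ioo_zero_inv_mul_log hr
    (h.neg.congr_fun (fun y hy => ?_) measurableSet_Ioo)
  obtain ⟨n, hn⟩ := Nat.exists_eq_succ_of_ne_zero (finrank_pos (R := ℝ) (M := E)).ne'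
  have hy : y ≠ 0 := hy.1.ne'
  simp only [Pi.neg_apply, hn, Nat.succ_sub_one, smul_eq_mul, pow_succ]
  field_simp

theorem lintegral_ball_inv_norm_pow_finrank_mul_neg_log_eq_top {r : ℝ} (hr0 : 0 < r)
    (hr1 : r ≤ 1) :
    ∫⁻ x in ball 0 r, ENNReal.ofReal (1 / (‖x‖ ^ finrank ℝ E * -Real.log ‖x‖)) ∂μ = ⊤ := by
  by_contra h
  refine not_integrableOn_ball_inv_norm_pow_finrank_mul_neg_log μ hr0
    ((lintegral_ofReal_ne_top_iff_integrable
      (by fun_prop : Measurable _).aestronglyMeasurable ?_).1 h)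
  refine ae_restrict_of_forall_mem measurableSet_ball fun x hx => ?_
  have hx1 : ‖x‖ ≤ 1 := (mem_ball_zero_iff.1 hx).le.trans hr1
  exact one_div_nonneg.2 (mul_nonneg (by positivity)
    (neg_nonneg.2 (Real.log_nonpos (norm_nonneg x) hx1)))

end Radial

theorem setLIntegral_prod_comp_fst {α β : Type*} [MeasurableSpace α] [MeasurableSpace β]
    {μ : Measure α} {ν : Measure β} [SFinite μ] [SFinite ν] {f : α → ENNReal} {s : Set α}
    (hf : AEMeasurable f (μ.restrict s)) (t : Set β) :
    ∫⁻ z in s ×ˢ t, f z.1 ∂μ.prod ν = (∫⁻ x in s, f x ∂μ) * ν t := by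
  rw [← Measure.prod_restrict]
  simpa using lintegral_prod_mul hf (aemeasurable_const (μ := ν.restrict t) (b := (1 : ENNReal)))

theorem ENNReal.ofReal_one_div_le_ofReal_div {a d : ℝ} (ha : 1 ≤ a) :
    ENNReal.ofReal (1 / d) ≤ ENNReal.ofReal (a / d) := by
  rcases le_total 0 d with hd | hd
  · exact ENNReal.ofReal_le_ofReal (div_le_div_of_nonneg_right ha hd)
  · rw [ENNReal.ofReal_of_nonpos (div_nonpos_of_nonneg_of_nonpos zero_le_one hd)]
    exact zero_le

/-- For every `0 < ε < 1/8`, the integral over the closed ball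
`K = {z ∈ ℂ³ : |z| ≤ ε}` of `z ↦ 4(1/2 − |z₂|²)/(|z₁|²(−log|z₁|))` with respect to
Lebesgue measure on `ℂ³ ≅ ℝ⁶` is infinite.  (Consequently the density of
`(dd^c u)² ∧ (i/2)dz₃∧dz̄₃` for `u = √(−log|z₁|)(|z₂|²−1)` is not locally integrable
near `{z₁ = 0}`, so this wedge product is not a Radon measure on `B(0,1/4)`.) -/
theorem integral_of_hessian_density_infinite (ε : ℝ) (hε0 : 0 < ε) (hε : ε < 1 / 8) :
    ∫⁻ z in {z : ℂ × ℂ × ℂ |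
        ‖z.1‖ ^ 2 + ‖z.2.1‖ ^ 2 + ‖z.2.2‖ ^ 2 ≤ ε ^ 2},
      ENNReal.ofReal
        (4 * (1 / 2 - ‖z.2.1‖ ^ 2) /
          (‖z.1‖ ^ 2 * (-Real.log (‖z.1‖)))) = ⊤ := by
  set B : Set ℂ := ball 0 (ε / 2)
  have hnorm : ∀ w ∈ B, ‖w‖ ^ 2 ≤ ε ^ 2 / 4 := fun w hw => by
    nlinarith [mem_ball_zero_iff.1 hw, norm_nonneg w]
  have hsub : B ×ˢ (B ×ˢ B) ⊆
      {z : ℂ × ℂ × ℂ | ‖z.1‖ ^ 2 + ‖z.2.1‖ ^ 2 + ‖z.2.2‖ ^ 2 ≤ ε ^ 2} := fun z ⟨h₁, h₂, h₃⟩ => by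
    simp only [mem_ofPred_eq]
    nlinarith [hnorm _ h₁, hnorm _ h₂, hnorm _ h₃]
  have hle : ∀ z ∈ B ×ˢ (B ×ˢ B), ENNReal.ofReal (1 / (‖z.1‖ ^ 2 * -Real.log ‖z.1‖)) ≤
      ENNReal.ofReal (4 * (1 / 2 - ‖z.2.1‖ ^ 2) / (‖z.1‖ ^ 2 * (-Real.log (‖z.1‖)))) :=
    fun z ⟨_, h₂, _⟩ => ENNReal.ofReal_one_div_le_ofReal_div (by nlinarith [hnorm _ h₂])
  have hB : volume (B ×ˢ B) ≠ 0 := by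
    rw [Measure.volume_eq_prod, Measure.prod_prod]
    exact mul_ne_zero (measure_ball_pos _ _ (by positivity)).ne'
      (measure_ball_pos _ _ (by positivity)).ne'
  have hdisc := lintegral_ball_inv_norm_pow_finrank_mul_neg_log_eq_top (volume : Measure ℂ)
    (r := ε / 2) (by positivity) (by linarith)
  rw [Complex.finrank_real_complex] at hdisc
  refine eq_top_iff.2 ?_
  calc ⊤ = (∫⁻ w in B, ENNReal.ofReal (1 / (‖w‖ ^ 2 * -Real.log ‖w‖))) * volume (B ×ˢ B) := by
        rw [hdisc, ENNReal.top_mul hB]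
    _ = ∫⁻ z in B ×ˢ (B ×ˢ B), ENNReal.ofReal (1 / (‖z.1‖ ^ 2 * -Real.log ‖z.1‖)) :=
        (setLIntegral_prod_comp_fst (by fun_prop) _).symm
    _ ≤ _ := setLIntegral_mono' (measurableSet_ball.prod (measurableSet_ball.prod
        measurableSet_ball)) hle
    _ ≤ _ := lintegral_mono_set hsub
end
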